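/- In the two-mode Fock space, with M̃⁽⁰⁾ = Σ_{N≥1} |N,0⟩⟨N,0|_{AB}, M̃⁽¹⁾ = Σ_{N≥1} |0,N⟩⟨0,N|_{AB}, and post-processed operators M⁽⁰'¹⁾ = M̃⁽⁰'¹⁾ + ½M̃⁽dc⁾ where M̃⁽dc⁾ = 𝟙 − M̃⁽⁰⁾ − M̃⁽¹⁾ − |0,0⟩⟨0,0|, the following identity holds when expressed in the pre-beam-splitter basis: M⁽⁰'¹⁾ = ½𝟙 − ½|0,0⟩⟨0,0| ± ½ Σ_{N≥1} Σ_{m,n=0}^{N} 2^{−N} √C(N,m) √C(N,n) (1 − (−1)^{m+n}) |N−m, m⟩⟨N−n, n|_{SR}. -/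
import Mathlib


open scoped BigOperators
open Finset

/-- The state `|N,0⟩_{AB}` expressed in the pre-beam-splitter `SR` Fock basis:
`|N,0⟩_{AB} = 2^{−N/2} Σ_{m=0}^{N} √C(N,m) |N−m,m⟩_{SR}`. -/
noncomputable def vA (N : ℕ) : ℕ × ℕ → ℂ :=
  fun f => if f.1 + f.2 = N
    then ((Real.sqrt (2 ^ N) : ℂ))⁻¹ * (Real.sqrt (N.choose f.2) : ℂ) else 0

/-- The state `|0,N⟩_{AB}` expressed in the pre-beam-splitter `SR` Fock basis:
`|0,N⟩_{AB} = 2^{−N/2} Σ_{m=0}^{N} √C(N,m) (−1)^m |N−m,m⟩_{SR}`. -/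
noncomputable def vB (N : ℕ) : ℕ × ℕ → ℂ :=
  fun f => if f.1 + f.2 = N
    then ((Real.sqrt (2 ^ N) : ℂ))⁻¹ * (Real.sqrt (N.choose f.2) : ℂ) * (-1) ^ f.2
    else 0

/-- `M̃⁽⁰⁾ = Σ_{N≥1} |N,0⟩⟨N,0|`, entrywise in the `SR` basis. -/
noncomputable def Mtilde0 : (ℕ × ℕ) → (ℕ × ℕ) → ℂ :=
  fun f f' => ∑' N : ℕ, if 1 ≤ N then vA N f * (starRingEnd ℂ) (vA N f') else 0

/-- `M̃⁽¹⁾ = Σ_{N≥1} |0,N⟩⟨0,N|`, entrywise in the `SR` basis. -/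
noncomputable def Mtilde1 : (ℕ × ℕ) → (ℕ × ℕ) → ℂ :=
  fun f f' => ∑' N : ℕ, if 1 ≤ N then vB N f * (starRingEnd ℂ) (vB N f') else 0

/-- The double-click operator `M̃⁽ᵈᶜ⁾ = 𝟙 − M̃⁽⁰⁾ − M̃⁽¹⁾ − |0,0⟩⟨0,0|`. -/
noncomputable def MtildeDC : (ℕ × ℕ) → (ℕ × ℕ) → ℂ :=
  fun f f' => (if f = f' then 1 else 0) - Mtilde0 f f' - Mtilde1 f f' -
    (if f = (0, 0) ∧ f' = (0, 0) then 1 else 0)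

/-- The post-processed operator `M⁽⁰⁾ = M̃⁽⁰⁾ + ½M̃⁽ᵈᶜ⁾`. -/
noncomputable def Mop0 : (ℕ × ℕ) → (ℕ × ℕ) → ℂ :=
  fun f f' => Mtilde0 f f' + (1 / 2 : ℂ) * MtildeDC f f'

/-- The post-processed operator `M⁽¹⁾ = M̃⁽¹⁾ + ½M̃⁽ᵈᶜ⁾`. -/
noncomputable def Mop1 : (ℕ × ℕ) → (ℕ × ℕ) → ℂ :=
  fun f f' => Mtilde1 f f' + (1 / 2 : ℂ) * MtildeDC f f'

/-- The `(f,f')` entry of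
`Σ_{N≥1} Σ_{m,n=0}^{N} 2^{−N} √C(N,m) √C(N,n) (1 − (−1)^{m+n}) |N−m,m⟩⟨N−n,n|`. -/
noncomputable def crossTerm (f f' : ℕ × ℕ) : ℂ :=
  ∑' N : ℕ, if 1 ≤ N then
    ∑ m ∈ Finset.range (N + 1), ∑ n ∈ Finset.range (N + 1),
      ((2 : ℂ) ^ N)⁻¹ * (Real.sqrt (N.choose m) : ℂ) * (Real.sqrt (N.choose n) : ℂ) *
        (1 - (-1 : ℂ) ^ (m + n)) *
        (if f = (N - m, m) ∧ f' = (N - n, n) then 1 else 0)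
  else 0

lemma aux_innerSum (N : ℕ) (f f' : ℕ × ℕ) (hf : f.1 + f.2 = N) (hf' : f'.1 + f'.2 = N) :
    (∑ m ∈ Finset.range (N + 1), ∑ n ∈ Finset.range (N + 1),
      ((2 : ℂ) ^ N)⁻¹ * (Real.sqrt (N.choose m) : ℂ) * (Real.sqrt (N.choose n) : ℂ) *
        (1 - (-1 : ℂ) ^ (m + n)) *
        (if f = (N - m, m) ∧ f' = (N - n, n) then 1 else 0)) =
    ((2 : ℂ) ^ N)⁻¹ * (Real.sqrt (N.choose f.2) : ℂ) * (Real.sqrt (N.choose f'.2) : ℂ) *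
        (1 - (-1 : ℂ) ^ (f.2 + f'.2)) := by
  have hm2 : f.2 ∈ Finset.range (N + 1) := by
    simp [Nat.lt_succ_iff]; omega
  have hn2 : f'.2 ∈ Finset.range (N + 1) := by
    simp [Nat.lt_succ_iff]; omega
  rw [Finset.sum_eq_single_of_mem f.2 hm2]
  · rw [Finset.sum_eq_single_of_mem f'.2 hn2]
    · have h1 : f = (N - f.2, f.2) := by
        rw [Prod.ext_iff]; exact ⟨by omega, rfl⟩
      have h2 : f' = (N - f'.2, f'.2) := by
        rw [Prod.ext_iff]; exact ⟨by omega, rfl⟩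
      rw [if_pos ⟨h1, h2⟩]; ring
    · intro n _ hn
      rw [if_neg, mul_zero]
      rintro ⟨-, h2⟩
      exact hn (by rw [h2])
  · intro m _ hm
    apply Finset.sum_eq_zero
    intro n _
    rw [if_neg, mul_zero]
    rintro ⟨h1, -⟩
    exact hm (by rw [h1])

lemma aux_key (f f' : ℕ × ℕ) : Mtilde0 f f' - Mtilde1 f f' = crossTerm f f' := by
  have h0 : Mtilde0 f f' = if 1 ≤ f.1 + f.2 then
      vA (f.1 + f.2) f * (starRingEnd ℂ) (vA (f.1 + f.2) f') else 0 := by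
    apply tsum_eq_single
    intro N hN
    have : ¬ (f.1 + f.2 = N) := fun h => hN h.symm
    simp [vA, this]
  have h1 : Mtilde1 f f' = if 1 ≤ f.1 + f.2 then
      vB (f.1 + f.2) f * (starRingEnd ℂ) (vB (f.1 + f.2) f') else 0 := by
    apply tsum_eq_single
    intro N hN
    have : ¬ (f.1 + f.2 = N) := fun h => hN h.symm
    simp [vB, this]
  have hc : crossTerm f f' = if 1 ≤ f.1 + f.2 then
      (∑ m ∈ Finset.range (f.1 + f.2 + 1), ∑ n ∈ Finset.range (f.1 + f.2 + 1),
      ((2 : ℂ) ^ (f.1 + f.2))⁻¹ * (Real.sqrt ((f.1 + f.2).choose m) : ℂ) *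
        (Real.sqrt ((f.1 + f.2).choose n) : ℂ) *
        (1 - (-1 : ℂ) ^ (m + n)) *
        (if f = (f.1 + f.2 - m, m) ∧ f' = (f.1 + f.2 - n, n) then 1 else 0)) else 0 := by
    apply tsum_eq_single
    intro N hN
    split
    · apply Finset.sum_eq_zero
      intro m hm
      apply Finset.sum_eq_zero
      intro n hn
      rw [if_neg, mul_zero]
      rintro ⟨h1, -⟩
      apply hN
      rw [h1]
      simp only [Finset.mem_range, Nat.lt_succ_iff] at hm
      simp; omega
    · rfl
  rw [h0, h1, hc]
  set N := f.1 + f.2 with hN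
  by_cases hge : 1 ≤ N
  · rw [if_pos hge, if_pos hge, if_pos hge]
    by_cases hf' : f'.1 + f'.2 = N
    · rw [aux_innerSum N f f' rfl hf']
      simp only [vA, vB, if_pos (show f.1 + f.2 = N from rfl), if_pos hf']
      have hsq : ((Real.sqrt (2 ^ N) : ℂ)) * ((Real.sqrt (2 ^ N) : ℂ)) = (2 : ℂ) ^ N := by
        rw [← Complex.ofReal_mul, Real.mul_self_sqrt (by positivity)]
        push_cast; ring
      simp only [map_mul, map_inv₀, map_pow, map_neg, map_one, Complex.conj_ofReal]
      have h2N : ((2 : ℂ) ^ N) ≠ 0 := pow_ne_zero _ two_ne_zero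
      have hs : ((Real.sqrt (2 ^ N) : ℂ)) ≠ 0 := by
        intro h; rw [h, zero_mul] at hsq; exact h2N hsq.symm
      field_simp
      rw [← hsq]
      ring_nf
    · have hz : (∑ m ∈ Finset.range (N + 1), ∑ n ∈ Finset.range (N + 1),
          ((2 : ℂ) ^ N)⁻¹ * (Real.sqrt (N.choose m) : ℂ) * (Real.sqrt (N.choose n) : ℂ) *
            (1 - (-1 : ℂ) ^ (m + n)) *
            (if f = (N - m, m) ∧ f' = (N - n, n) then 1 else 0)) = 0 := by
        apply Finset.sum_eq_zero; intro m _
        apply Finset.sum_eq_zero; intro n hn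
        rw [if_neg, mul_zero]
        rintro ⟨-, h2⟩
        apply hf'
        rw [h2]
        simp only [Finset.mem_range, Nat.lt_succ_iff] at hn
        simp; omega
      rw [hz]
      simp [vA, vB, hf']
  · rw [if_neg hge, if_neg hge, if_neg hge]; ring

/-- In the pre-beam-splitter `SR` Fock basis,
`M⁽⁰'¹⁾ = ½𝟙 − ½|0,0⟩⟨0,0| ± ½ Σ_{N≥1} Σ_{m,n=0}^{N} 2^{−N} √C(N,m) √C(N,n)
(1 − (−1)^{m+n}) |N−m,m⟩⟨N−n,n|`. -/
theorem postprocessed_povm_identity (f f' : ℕ × ℕ) :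
    Mop0 f f' = (1 / 2 : ℂ) * (if f = f' then 1 else 0) -
      (1 / 2 : ℂ) * (if f = (0, 0) ∧ f' = (0, 0) then 1 else 0) +
      (1 / 2 : ℂ) * crossTerm f f' ∧
    Mop1 f f' = (1 / 2 : ℂ) * (if f = f' then 1 else 0) -
      (1 / 2 : ℂ) * (if f = (0, 0) ∧ f' = (0, 0) then 1 else 0) -
      (1 / 2 : ℂ) * crossTerm f f' := by
  have key := aux_key f f'
  constructor
  · simp only [Mop0, MtildeDC]
    linear_combination (1/2 : ℂ) * key
  · simp only [Mop1, MtildeDC]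
    linear_combination (-(1/2) : ℂ) * key
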